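/- arXiv:0711.4393 — 2 statements merged into one kernel-verified Lean document; each statement's English description precedes it below -/
import Mathlib

section
/- Let P be a lattice polygon in ℝ² all of whose lattice points are vertices of P. Then P is contained in a closed strip of lattice width one, i.e., there is a primitive linear functional ℓ : ℤ² → ℤ and an integer c with c ≤ ℓ(x) ≤ c + 1 for all x ∈ P. -/
open Pointwise

/-- The lattice `ℤ²` viewed inside `ℝ²`. -/
def L2 : Set (ℝ × ℝ) := {x | (∃ m : ℤ, x.1 = (m : ℝ)) ∧ ∃ n : ℤ, x.2 = (n : ℝ)}

/-- A lattice polygon: the convex hull of a finite set of lattice points. -/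
def IsLatticePolygon (P : Set (ℝ × ℝ)) : Prop :=
  ∃ S : Finset (ℝ × ℝ), (S : Set (ℝ × ℝ)) ⊆ L2 ∧ P = convexHull ℝ (S : Set (ℝ × ℝ))

/-- Standard dot product on `ℝ²`. -/
def dot (u x : ℝ × ℝ) : ℝ := u.1 * x.1 + u.2 * x.2

/-- The normal cone of `P` at a point `x`: linear functionals maximized over `P` at `x`.
For `x` in the relative interior of a face `F`, this is the normal-fan cone of `F`. -/
def NCone (P : Set (ℝ × ℝ)) (x : ℝ × ℝ) : Set (ℝ × ℝ) :=
  {u : ℝ × ℝ | ∀ y ∈ P, dot u y ≤ dot u x}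

/-- The normal fan of `Q` coarsens that of `P`: every cone of the normal fan of `P`
is contained in a cone of the normal fan of `Q`. -/
def Coarsens (Q P : Set (ℝ × ℝ)) : Prop :=
  ∀ x ∈ P, ∃ y ∈ Q, NCone P x ⊆ NCone Q y

/-- An edge of a polygon: an extreme (face) subset which is a nondegenerate segment. -/
def IsEdge (P e : Set (ℝ × ℝ)) : Prop :=
  IsExtreme ℝ P e ∧ ∃ a b : ℝ × ℝ, a ≠ b ∧ e = segment ℝ a b

/-- A polygon in `ℝ²` is two-dimensional iff it has nonempty interior. -/
def IsTwoDim (P : Set (ℝ × ℝ)) : Prop := (interior P).Nonempty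

/-!
If two lattice points of `P` are congruent modulo 2, their midpoint is a lattice point of `P`
strictly between them; so `P` has at most four lattice points, pairwise incongruent modulo 2. Any
three of them span a unimodular triangle: their determinant is odd, hence nonzero, and if it were
not `±1`, reducing a lattice point outside the sublattice spanned by two edges modulo that
sublattice would give a lattice point of the triangle other than its vertices. A unimodular
triangle `p, q, r` lies in the strip `0 ≤ ℓ - ℓ(p) ≤ 1` of the dual functional with
`ℓ(q - p) = 1`, `ℓ(r - p) = 0`. With a fourth point, `p₃ - p₀ = s (p₁ - p₀) + t (p₂ - p₀)` with
`s, t = ±1`; `s = t = -1` would make `p₀` the centroid of the others, and otherwise the dual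
functional of `p₁ - p₀` or of `p₂ - p₀` works.
-/

def toR2 : ℤ × ℤ →+ ℝ × ℝ := (Int.castAddHom ℝ).prodMap (Int.castAddHom ℝ)

def mod2 : ℤ × ℤ →+ ZMod 2 × ZMod 2 := (Int.castAddHom _).prodMap (Int.castAddHom _)

def det2 (u v : ℤ × ℤ) : ℤ := u.1 * v.2 - u.2 * v.1

def zdot (a z : ℤ × ℤ) : ℤ := a.1 * z.1 + a.2 * z.2

@[simp] lemma toR2_apply (z : ℤ × ℤ) : toR2 z = ((z.1 : ℝ), (z.2 : ℝ)) := rfl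

@[simp] lemma mod2_apply (z : ℤ × ℤ) : mod2 z = ((z.1 : ZMod 2), (z.2 : ZMod 2)) := rfl

lemma toR2_injective : Function.Injective toR2 := fun a b h => by
  simp only [toR2_apply, Prod.mk.injEq, Int.cast_inj] at h
  exact Prod.ext h.1 h.2

lemma L2_eq_range : L2 = Set.range toR2 := by
  ext ⟨x, y⟩
  simp [L2, eq_comm]

lemma dot_toR2 (a z : ℤ × ℤ) : dot (toR2 a) (toR2 z) = zdot a z := by
  simp [dot, zdot]

@[simp] lemma det2_self (u : ℤ × ℤ) : det2 u u = 0 := by simp only [det2]; ring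

lemma det2_swap (u v : ℤ × ℤ) : det2 v u = -det2 u v := by
  simp only [det2]; ring

lemma det2_smul_eq (u v w : ℤ × ℤ) : det2 u v • w = det2 w v • u + det2 u w • v := by
  ext <;>
    simp only [det2, Prod.smul_fst, Prod.smul_snd, Prod.fst_add, Prod.snd_add, smul_eq_mul] <;> ring

@[simp] lemma zdot_zero (a : ℤ × ℤ) : zdot a 0 = 0 := by simp [zdot]

lemma zdot_sub (a u v : ℤ × ℤ) : zdot a (u - v) = zdot a u - zdot a v := by
  simp only [zdot, Prod.fst_sub, Prod.snd_sub]; ring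

lemma zdot_smul_add_smul (a u v : ℤ × ℤ) (s t : ℤ) :
    zdot a (s • u + t • v) = s * zdot a u + t * zdot a v := by
  simp only [zdot, Prod.fst_add, Prod.snd_add, Prod.smul_fst, Prod.smul_snd, smul_eq_mul]; ring

lemma add_smul_add_smul_mem_convexHull {E : Type*} [AddCommGroup E] [Module ℝ E] {x y z : E}
    {a b c : ℝ} (ha : 0 ≤ a) (hb : 0 ≤ b) (hc : 0 ≤ c) (habc : a + b + c = 1) :
    a • x + b • y + c • z ∈ convexHull ℝ {x, y, z} := by
  have := Finset.centerMass_mem_convexHull (Finset.univ : Finset (Fin 3))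
    (w := ![a, b, c]) (z := ![x, y, z]) (s := ({x, y, z} : Set E))
    (by intro i _; fin_cases i <;> simpa) (by simp [Fin.sum_univ_three, habc])
    (by intro i _; fin_cases i <;> simp)
  simpa [Finset.centerMass, Fin.sum_univ_three, habc] using this

def InUnitStrip (V : Set (ℤ × ℤ)) : Prop :=
  ∃ a : ℤ × ℤ, Int.gcd a.1 a.2 = 1 ∧ ∃ c : ℤ, ∀ z ∈ V, c ≤ zdot a z ∧ zdot a z ≤ c + 1

lemma InUnitStrip.mono {V W : Set (ℤ × ℤ)} (hW : InUnitStrip W) (hVW : V ⊆ W) : InUnitStrip V :=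
  let ⟨a, ha, c, hc⟩ := hW
  ⟨a, ha, c, fun z hz => hc z (hVW hz)⟩

lemma convexHull_image_subset_strip {a : ℤ × ℤ} {c : ℤ} {V : Set (ℤ × ℤ)}
    (hV : ∀ z ∈ V, c ≤ zdot a z ∧ zdot a z ≤ c + 1) :
    ∀ x ∈ convexHull ℝ (toR2 '' V), (c : ℝ) ≤ dot (toR2 a) x ∧ dot (toR2 a) x ≤ c + 1 := by
  have hconv : Convex ℝ {x : ℝ × ℝ | dot (toR2 a) x ∈ Set.Icc (c : ℝ) ((c : ℝ) + 1)} :=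
    (convex_Icc _ _).linear_preimage
      ((a.1 : ℝ) • LinearMap.fst ℝ ℝ ℝ + (a.2 : ℝ) • LinearMap.snd ℝ ℝ ℝ)
  refine fun x hx => convexHull_min ?_ hconv hx
  rintro _ ⟨z, hz, rfl⟩
  obtain ⟨hc, hc'⟩ := hV z hz
  exact ⟨by rw [dot_toR2]; exact_mod_cast hc, by rw [dot_toR2]; exact_mod_cast hc'⟩

lemma inUnitStrip_of_zdot_sub {a : ℤ × ℤ} (ha : Int.gcd a.1 a.2 = 1) (p : ℤ × ℤ)
    {V : Set (ℤ × ℤ)} (hV : ∀ z ∈ V, zdot a (z - p) = 0 ∨ zdot a (z - p) = 1) :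
    InUnitStrip V :=
  ⟨a, ha, zdot a p, fun z hz => by have := hV z hz; rw [zdot_sub] at this; omega⟩

lemma gcd_eq_one_of_zdot_eq_one {a u : ℤ × ℤ} (h : zdot a u = 1) : Int.gcd a.1 a.2 = 1 :=
  Int.isCoprime_iff_gcd_eq_one.mp ⟨u.1, u.2, by rw [← h, zdot]; ring⟩

lemma exists_primitive_zdot_eq_zero (v : ℤ × ℤ) :
    ∃ a : ℤ × ℤ, Int.gcd a.1 a.2 = 1 ∧ zdot a v = 0 := by
  by_cases hv : v = 0
  · exact ⟨(1, 0), rfl, by simp [hv, zdot]⟩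
  have hg : 0 < Int.gcd v.1 v.2 :=
    Int.gcd_pos_iff.mpr (by contrapose! hv; exact Prod.ext hv.1 hv.2)
  obtain ⟨m, n, hmn, hm, hn⟩ := Int.exists_gcd_one hg
  refine ⟨(-n, m), by simpa [Int.gcd_comm] using hmn, ?_⟩
  simp only [zdot]
  linear_combination (-n) * hm + m * hn

lemma exists_zdot_eq_one_zdot_eq_zero {u v : ℤ × ℤ} (h : IsUnit (det2 u v)) :
    ∃ a : ℤ × ℤ, zdot a u = 1 ∧ zdot a v = 0 := by
  refine ⟨det2 u v • (v.2, -v.1), ?_, ?_⟩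
  · rw [← Int.isUnit_mul_self h]
    simp only [zdot, det2, Prod.smul_mk, smul_eq_mul]
    ring
  · simp only [zdot, Prod.smul_mk, smul_eq_mul]
    ring

lemma inUnitStrip_pair (p q : ℤ × ℤ) : InUnitStrip {p, q} := by
  obtain ⟨a, ha, hq⟩ := exists_primitive_zdot_eq_zero (q - p)
  refine inUnitStrip_of_zdot_sub ha p ?_
  rintro z (rfl | rfl) <;> simp [hq]

lemma inUnitStrip_triangle {p q r : ℤ × ℤ} (h : IsUnit (det2 (q - p) (r - p))) :
    InUnitStrip {p, q, r} := by
  obtain ⟨a, hq, hr⟩ := exists_zdot_eq_one_zdot_eq_zero h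
  refine inUnitStrip_of_zdot_sub (gcd_eq_one_of_zdot_eq_one hq) p ?_
  rintro z (rfl | rfl | rfl) <;> simp [hq, hr]

lemma eq_smul_add_smul_of_isUnit_det2 {u v : ℤ × ℤ} (h : IsUnit (det2 u v)) (w : ℤ × ℤ) :
    w = (det2 u v * det2 w v) • u + (det2 u v * det2 u w) • v := by
  calc w = (det2 u v * det2 u v) • w := by rw [Int.isUnit_mul_self h, one_smul]
    _ = _ := by rw [mul_smul, det2_smul_eq u v w, smul_add, smul_smul, smul_smul]

lemma inUnitStrip_quadrilateral {p₀ p₁ p₂ p₃ : ℤ × ℤ}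
    (h₁₂ : IsUnit (det2 (p₁ - p₀) (p₂ - p₀))) (h₃₂ : IsUnit (det2 (p₃ - p₀) (p₂ - p₀)))
    (h₁₃ : IsUnit (det2 (p₁ - p₀) (p₃ - p₀))) (hcent : p₁ + p₂ + p₃ ≠ 3 • p₀) :
    InUnitStrip {p₀, p₁, p₂, p₃} := by
  have hw := eq_smul_add_smul_of_isUnit_det2 h₁₂ (p₃ - p₀)
  rcases Int.isUnit_iff.mp (h₁₂.mul h₃₂) with hs | hs <;> rw [hs] at hw
  · obtain ⟨a, h₁, h₂⟩ := exists_zdot_eq_one_zdot_eq_zero h₁₂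
    have h₃ : zdot a (p₃ - p₀) = 1 := by rw [hw, zdot_smul_add_smul, h₁, h₂]; ring
    refine inUnitStrip_of_zdot_sub (gcd_eq_one_of_zdot_eq_one h₁) p₀ ?_
    rintro z (rfl | rfl | rfl | rfl) <;> simp [h₁, h₂, h₃]
  rcases Int.isUnit_iff.mp (h₁₂.mul h₁₃) with ht | ht <;> rw [ht] at hw
  · obtain ⟨a, h₂, h₁⟩ := exists_zdot_eq_one_zdot_eq_zero (u := p₂ - p₀) (v := p₁ - p₀)
      (by rw [det2_swap]; exact h₁₂.neg)
    have h₃ : zdot a (p₃ - p₀) = 1 := by rw [hw, zdot_smul_add_smul, h₁, h₂]; ring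
    refine inUnitStrip_of_zdot_sub (gcd_eq_one_of_zdot_eq_one h₂) p₀ ?_
    rintro z (rfl | rfl | rfl | rfl) <;> simp [h₁, h₂, h₃]
  · refine absurd ?_ hcent
    rw [neg_one_smul, neg_one_smul, sub_eq_iff_eq_add] at hw
    rw [hw]
    abel

lemma exists_not_dvd_det2 {u v : ℤ × ℤ} (h0 : det2 u v ≠ 0) (hu : ¬IsUnit (det2 u v)) :
    ∃ z : ℤ × ℤ, ¬(det2 u v ∣ det2 z v ∧ det2 u v ∣ det2 u z) := by
  by_contra! h
  obtain ⟨hv₂, hu₂⟩ := h (1, 0)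
  obtain ⟨hv₁, hu₁⟩ := h (0, 1)
  simp only [det2, one_mul, zero_mul, sub_zero, zero_sub, mul_one, mul_zero, dvd_neg]
    at hv₂ hu₂ hv₁ hu₁
  have : det2 u v * det2 u v ∣ det2 u v * 1 := by
    rw [mul_one]
    show _ ∣ u.1 * v.2 - u.2 * v.1
    exact dvd_sub (mul_dvd_mul hu₁ hv₂) (mul_dvd_mul hu₂ hv₁)
  exact hu (isUnit_of_dvd_one ((mul_dvd_mul_iff_left h0).mp this))

noncomputable def cramerCoords (u v : ℤ × ℤ) : ℤ × ℤ →+ ℝ × ℝ :=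
  AddMonoidHom.mk' (fun w => ((det2 w v : ℝ) / det2 u v, (det2 u w : ℝ) / det2 u v))
    (fun a b => by ext <;> simp only [det2, Prod.fst_add, Prod.snd_add] <;> push_cast <;> ring)

lemma cramerCoords_apply (u v w : ℤ × ℤ) :
    cramerCoords u v w = ((det2 w v : ℝ) / det2 u v, (det2 u w : ℝ) / det2 u v) := rfl

lemma cramerCoords_left {u v : ℤ × ℤ} (h0 : det2 u v ≠ 0) : cramerCoords u v u = (1, 0) := by
  have : (det2 u v : ℝ) ≠ 0 := by exact_mod_cast h0
  simp [cramerCoords_apply, this]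

lemma cramerCoords_right {u v : ℤ × ℤ} (h0 : det2 u v ≠ 0) : cramerCoords u v v = (0, 1) := by
  have : (det2 u v : ℝ) ≠ 0 := by exact_mod_cast h0
  simp [cramerCoords_apply, this]

lemma toR2_eq_cramerCoords {u v : ℤ × ℤ} (h0 : det2 u v ≠ 0) (w : ℤ × ℤ) :
    toR2 w = (cramerCoords u v w).1 • toR2 u + (cramerCoords u v w).2 • toR2 v := by
  have : (det2 u v : ℝ) ≠ 0 := by exact_mod_cast h0
  ext <;> simp only [cramerCoords_apply, toR2_apply, Prod.fst_add, Prod.snd_add, Prod.smul_fst,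
    Prod.smul_snd, smul_eq_mul] <;> field_simp <;> simp only [det2] <;> push_cast <;> ring

lemma toR2_add_mem_convexHull {p u v w : ℤ × ℤ} {α β : ℝ} (h0 : det2 u v ≠ 0)
    (hw : cramerCoords u v w = (α, β)) (hα : 0 ≤ α) (hβ : 0 ≤ β) (hαβ : α + β ≤ 1) :
    toR2 (p + w) ∈ convexHull ℝ {toR2 p, toR2 (p + u), toR2 (p + v)} := by
  have key : toR2 (p + w) =
      (1 - α - β) • toR2 p + α • toR2 (p + u) + β • toR2 (p + v) := by
    rw [map_add, map_add, map_add, toR2_eq_cramerCoords h0 w, hw]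
    module
  rw [key]
  exact add_smul_add_smul_mem_convexHull (by linarith) hα hβ (by ring)

lemma dvd_of_fract_div_eq_zero {x d : ℤ} (hd : d ≠ 0) (h : Int.fract ((x : ℝ) / d) = 0) :
    d ∣ x := by
  obtain ⟨m, hm⟩ := Int.fract_eq_zero_iff.mp h
  rw [eq_div_iff (by exact_mod_cast hd)] at hm
  exact ⟨m, by rw [mul_comm]; exact_mod_cast hm.symm⟩

lemma exists_latticePoint_mem_convexHull_triangle {p u v : ℤ × ℤ} (h0 : det2 u v ≠ 0)
    (h1 : ¬IsUnit (det2 u v)) :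
    ∃ w, w ≠ 0 ∧ w ≠ u ∧ w ≠ v ∧
      toR2 (p + w) ∈ convexHull ℝ {toR2 p, toR2 (p + u), toR2 (p + v)} := by
  have hu : cramerCoords u v u = (1, 0) := cramerCoords_left h0
  have hv : cramerCoords u v v = (0, 1) := cramerCoords_right h0
  obtain ⟨z, hz⟩ := exists_not_dvd_det2 h0 h1
  set α := Int.fract (cramerCoords u v z).1
  set β := Int.fract (cramerCoords u v z).2
  -- `w` is `z` reduced into the half-open parallelogram spanned by `u` and `v`; if it lies in the
  -- far half of it, `u + v - w` lies in the near triangle.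
  set w := z - ⌊(cramerCoords u v z).1⌋ • u - ⌊(cramerCoords u v z).2⌋ • v
  have hw : cramerCoords u v w = (α, β) := by
    simp only [w, map_sub, map_zsmul, hu, hv]
    ext <;> simp [α, β, ← Int.self_sub_floor]
  have hαβ : ¬(α = 0 ∧ β = 0) := fun h =>
    hz ⟨dvd_of_fract_div_eq_zero h0 h.1, dvd_of_fract_div_eq_zero h0 h.2⟩
  have hα : 0 ≤ α ∧ α < 1 := ⟨Int.fract_nonneg _, Int.fract_lt_one _⟩
  have hβ : 0 ≤ β ∧ β < 1 := ⟨Int.fract_nonneg _, Int.fract_lt_one _⟩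
  by_cases hle : α + β ≤ 1
  · refine ⟨w, ne_of_apply_ne (cramerCoords u v) ?_, ne_of_apply_ne (cramerCoords u v) ?_,
      ne_of_apply_ne (cramerCoords u v) ?_, toR2_add_mem_convexHull h0 hw hα.1 hβ.1 hle⟩ <;>
    simp only [hw, map_zero, hu, hv, ne_eq, Prod.mk.injEq, Prod.mk_eq_zero] <;>
    grind
  · have hw' : cramerCoords u v (u + v - w) = (1 - α, 1 - β) := by
      rw [map_sub, map_add, hu, hv, hw]; ext <;> simp
    refine ⟨u + v - w, ne_of_apply_ne (cramerCoords u v) ?_, ne_of_apply_ne (cramerCoords u v) ?_,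
      ne_of_apply_ne (cramerCoords u v) ?_,
      toR2_add_mem_convexHull h0 hw' (by linarith) (by linarith) (by linarith)⟩ <;>
    simp only [hw', map_zero, hu, hv, ne_eq, Prod.mk.injEq, Prod.mk_eq_zero] <;>
    grind

lemma det2_ne_zero_of_mod2_ne {p q r : ℤ × ℤ} (hpq : mod2 p ≠ mod2 q) (hpr : mod2 p ≠ mod2 r)
    (hqr : mod2 q ≠ mod2 r) : det2 (q - p) (r - p) ≠ 0 := by
  have key : ∀ a b c : ZMod 2 × ZMod 2, a ≠ b → a ≠ c → b ≠ c →
      (b.1 - a.1) * (c.2 - a.2) - (b.2 - a.2) * (c.1 - a.1) ≠ 0 := by decide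
  intro h
  apply key _ _ _ hpq hpr hqr
  have := congrArg (Int.cast : ℤ → ZMod 2) h
  simpa [det2] using this

def LatticePointsExtreme (P : Set (ℝ × ℝ)) : Prop :=
  ∀ z : ℤ × ℤ, toR2 z ∈ P → toR2 z ∈ P.extremePoints ℝ

lemma mem_of_toR2_mem_convexHull_image {P : Set (ℝ × ℝ)} (hPc : Convex ℝ P)
    (hP : LatticePointsExtreme P) {T : Set (ℤ × ℤ)}
    (hT : ∀ z ∈ T, toR2 z ∈ P) {z : ℤ × ℤ} (hz : toR2 z ∈ convexHull ℝ (toR2 '' T)) : z ∈ T := by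
  have hsub : convexHull ℝ (toR2 '' T) ⊆ P :=
    convexHull_min (Set.image_subset_iff.mpr hT) hPc
  have hext := inter_extremePoints_subset_extremePoints_of_subset hsub ⟨hz, hP z (hsub hz)⟩
  exact toR2_injective.mem_set_image.mp (extremePoints_convexHull_subset hext)

lemma eq_of_mod2_eq {P : Set (ℝ × ℝ)} (hPc : Convex ℝ P)
    (hP : LatticePointsExtreme P) {p q : ℤ × ℤ}
    (hp : toR2 p ∈ P) (hq : toR2 q ∈ P) (h : mod2 p = mod2 q) : p = q := by
  obtain ⟨w, rfl⟩ : ∃ w, q = p + 2 • w := by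
    have : mod2 (q - p) = 0 := by rw [map_sub, h, sub_self]
    simp only [mod2_apply, Prod.fst_sub, Prod.snd_sub, Prod.mk_eq_zero,
      ZMod.intCast_zmod_eq_zero_iff_dvd] at this
    obtain ⟨⟨a, ha⟩, ⟨b, hb⟩⟩ := this
    exact ⟨(a, b), by ext <;> simp <;> omega⟩
  have hmid : midpoint ℝ (toR2 p) (toR2 (p + 2 • w)) = toR2 (p + w) := by
    rw [midpoint_eq_smul_add, map_add, map_add, map_nsmul, invOf_eq_inv]
    module
  have := (mem_extremePoints.mp (hP _ (hmid ▸ hPc.midpoint_mem hp hq))).2 _ hp _ hq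
    (hmid ▸ midpoint_mem_openSegment _ _)
  exact toR2_injective (this.1.trans this.2.symm)

lemma isUnit_det2_sub {P : Set (ℝ × ℝ)} (hPc : Convex ℝ P)
    (hP : LatticePointsExtreme P) {p q r : ℤ × ℤ}
    (hp : toR2 p ∈ P) (hq : toR2 q ∈ P) (hr : toR2 r ∈ P)
    (hpq : p ≠ q) (hpr : p ≠ r) (hqr : q ≠ r) : IsUnit (det2 (q - p) (r - p)) := by
  by_contra h1
  have h0 := det2_ne_zero_of_mod2_ne (mt (eq_of_mod2_eq hPc hP hp hq) hpq)
    (mt (eq_of_mod2_eq hPc hP hp hr) hpr) (mt (eq_of_mod2_eq hPc hP hq hr) hqr)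
  obtain ⟨w, hw0, hwq, hwr, hw⟩ := exists_latticePoint_mem_convexHull_triangle (p := p) h0 h1
  rw [add_sub_cancel, add_sub_cancel] at hw
  have : p + w ∈ ({p, q, r} : Set (ℤ × ℤ)) :=
    mem_of_toR2_mem_convexHull_image hPc hP (by rintro z (rfl | rfl | rfl) <;> assumption)
      (by simpa [Set.image_insert_eq] using hw)
  rcases this with h | h | h
  · exact hw0 (by simpa using h)
  · exact hwq (eq_sub_of_add_eq' h)
  · exact hwr (eq_sub_of_add_eq' h)

lemma add_add_ne_three_smul {P : Set (ℝ × ℝ)} (hPc : Convex ℝ P)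
    (hP : LatticePointsExtreme P) {p q r s : ℤ × ℤ}
    (hq : toR2 q ∈ P) (hr : toR2 r ∈ P) (hs : toR2 s ∈ P)
    (hpq : p ≠ q) (hpr : p ≠ r) (hps : p ≠ s) : q + r + s ≠ 3 • p := by
  intro h
  have hp : toR2 p = (1 / 3 : ℝ) • toR2 q + (1 / 3 : ℝ) • toR2 r + (1 / 3 : ℝ) • toR2 s := by
    have := congrArg toR2 h
    rw [map_add, map_add, map_nsmul] at this
    rw [← smul_add, ← smul_add, this]
    module
  have : p ∈ ({q, r, s} : Set (ℤ × ℤ)) :=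
    mem_of_toR2_mem_convexHull_image hPc hP (by rintro z (rfl | rfl | rfl) <;> assumption)
      (by rw [Set.image_insert_eq, Set.image_insert_eq, Set.image_singleton, hp]
          exact add_smul_add_smul_mem_convexHull (by norm_num) (by norm_num) (by norm_num)
            (by norm_num))
  rcases this with rfl | rfl | rfl <;> contradiction

lemma card_le_four_of_latticePointsExtreme {P : Set (ℝ × ℝ)} (hPc : Convex ℝ P)
    (hP : LatticePointsExtreme P) {V : Finset (ℤ × ℤ)}
    (hV : ∀ z ∈ V, toR2 z ∈ P) : V.card ≤ 4 :=
  calc V.card ≤ (Finset.univ : Finset (ZMod 2 × ZMod 2)).card :=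
        Finset.card_le_card_of_injOn mod2 (fun _ _ => Finset.mem_univ _)
          (fun p hp q hq h => eq_of_mod2_eq hPc hP (hV p hp) (hV q hq) h)
    _ = 4 := rfl

lemma inUnitStrip_of_latticePointsExtreme {P : Set (ℝ × ℝ)} (hPc : Convex ℝ P)
    (hP : LatticePointsExtreme P) {V : Finset (ℤ × ℤ)}
    (hV : ∀ z ∈ V, toR2 z ∈ P) : InUnitStrip V := by
  have hdet {p q r} (hp : p ∈ V) (hq : q ∈ V) (hr : r ∈ V) :=
    isUnit_det2_sub hPc hP (hV p hp) (hV q hq) (hV r hr)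
  have hcard := card_le_four_of_latticePointsExtreme hPc hP hV
  interval_cases h : V.card
  · rw [Finset.card_eq_zero.mp h]
    exact (inUnitStrip_pair 0 0).mono (by simp)
  · obtain ⟨p, rfl⟩ := Finset.card_eq_one.mp h
    exact (inUnitStrip_pair p p).mono (by simp)
  · obtain ⟨p, q, -, rfl⟩ := Finset.card_eq_two.mp h
    simpa using inUnitStrip_pair p q
  · obtain ⟨p, q, r, hpq, hpr, hqr, rfl⟩ := Finset.card_eq_three.mp h
    simpa using inUnitStrip_triangle (hdet (by simp) (by simp) (by simp) hpq hpr hqr)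
  · obtain ⟨p₀, p₁, p₂, p₃, h₀₁, h₀₂, h₀₃, h₁₂, h₁₃, h₂₃, rfl⟩ := Finset.card_eq_four.mp h
    simpa using inUnitStrip_quadrilateral
      (hdet (by simp) (by simp) (by simp) h₀₁ h₀₂ h₁₂)
      (hdet (by simp) (by simp) (by simp) h₀₃ h₀₂ h₂₃.symm)
      (hdet (by simp) (by simp) (by simp) h₀₁ h₀₃ h₁₃)
      (add_add_ne_three_smul hPc hP (hV _ (by simp)) (hV _ (by simp)) (hV _ (by simp))
        h₀₁ h₀₂ h₀₃)

theorem all_lattice_points_vertices_implies_thin_strip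
    (P : Set (ℝ × ℝ)) (hP : IsLatticePolygon P)
    (h : ∀ x ∈ P, x ∈ L2 → x ∈ Set.extremePoints ℝ P) :
    ∃ a : ℤ × ℤ, Int.gcd a.1 a.2 = 1 ∧ ∃ c : ℤ,
      ∀ x ∈ P, (c : ℝ) ≤ dot ((a.1 : ℝ), (a.2 : ℝ)) x ∧
        dot ((a.1 : ℝ), (a.2 : ℝ)) x ≤ (c : ℝ) + 1 := by
  obtain ⟨S, hSL, rfl⟩ := hP
  set V := S.preimage toR2 toR2_injective.injOn
  have hS : (S : Set (ℝ × ℝ)) = toR2 '' V := by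
    rw [Finset.coe_preimage, Set.image_preimage_eq_of_subset (L2_eq_range ▸ hSL)]
  obtain ⟨a, ha, c, hc⟩ := inUnitStrip_of_latticePointsExtreme (convex_convexHull ℝ _)
    (fun z hz => h _ hz (L2_eq_range ▸ Set.mem_range_self z))
    (V := V) (fun z hz => subset_convexHull ℝ _ (by simpa [V] using hz))
  exact ⟨a, ha, c, hS ▸ convexHull_image_subset_strip hc⟩
end

section
/- Let P ⊂ ℝ³ be the simplex with vertices v₀=(0,0,0), v₁=(1,0,0), v₂=(0,1,0), v₃=(1,1,2). Then P ∩ ℤ³ = {v₀,v₁,v₂,v₃}, the point (1,1,1) lies in (P+P) ∩ ℤ³, but (1,1,1) is not the sum of two lattice points of P; hence (P ∩ ℤ³) + (P ∩ ℤ³) ⊊ (P+P) ∩ ℤ³. -/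
open Pointwise

/-- The lattice `ℤ³` viewed inside `ℝ³`. -/
def L3 : Set (ℝ × ℝ × ℝ) :=
  {x | (∃ m : ℤ, x.1 = (m : ℝ)) ∧ (∃ n : ℤ, x.2.1 = (n : ℝ)) ∧ ∃ k : ℤ, x.2.2 = (k : ℝ)}

lemma L3_add {a b : ℝ × ℝ × ℝ} (ha : a ∈ L3) (hb : b ∈ L3) : a + b ∈ L3 := by
  obtain ⟨⟨m1, h1⟩, ⟨n1, h2⟩, ⟨k1, h3⟩⟩ := ha
  obtain ⟨⟨m2, g1⟩, ⟨n2, g2⟩, ⟨k2, g3⟩⟩ := hb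
  exact ⟨⟨m1 + m2, by push_cast; simp [h1, g1]⟩, ⟨n1 + n2, by push_cast; simp [h2, g2]⟩,
    ⟨k1 + k2, by push_cast; simp [h3, g3]⟩⟩

lemma hull_subset_halfspaces :
    convexHull ℝ ({((0:ℝ),(0:ℝ),(0:ℝ)), ((1:ℝ),(0:ℝ),(0:ℝ)),
        ((0:ℝ),(1:ℝ),(0:ℝ)), ((1:ℝ),(1:ℝ),(2:ℝ))} : Set (ℝ × ℝ × ℝ)) ⊆
      {x | 0 ≤ x.2.2 ∧ x.2.2 ≤ 2 * x.1 ∧ x.2.2 ≤ 2 * x.2.1 ∧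
        2 * x.1 + 2 * x.2.1 - x.2.2 ≤ 2} := by
  apply convexHull_min
  · intro x hx
    simp only [Set.mem_insert_iff, Set.mem_singleton_iff] at hx
    rcases hx with h | h | h | h <;> subst h <;> norm_num
  · rintro x ⟨hx1, hx2, hx3, hx4⟩ y ⟨hy1, hy2, hy3, hy4⟩ a b ha hb hab
    simp only [Set.mem_setOf_eq, Prod.fst_add, Prod.snd_add, Prod.smul_fst, Prod.smul_snd,
      smul_eq_mul]
    refine ⟨?_, ?_, ?_, ?_⟩ <;> nlinarith

theorem simplex_not_normal :
    ∀ P : Set (ℝ × ℝ × ℝ),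
      P = convexHull ℝ {((0:ℝ),(0:ℝ),(0:ℝ)), ((1:ℝ),(0:ℝ),(0:ℝ)),
        ((0:ℝ),(1:ℝ),(0:ℝ)), ((1:ℝ),(1:ℝ),(2:ℝ))} →
      P ∩ L3 = {((0:ℝ),(0:ℝ),(0:ℝ)), ((1:ℝ),(0:ℝ),(0:ℝ)),
        ((0:ℝ),(1:ℝ),(0:ℝ)), ((1:ℝ),(1:ℝ),(2:ℝ))} ∧
      ((1:ℝ),(1:ℝ),(1:ℝ)) ∈ (P + P) ∩ L3 ∧
      ((1:ℝ),(1:ℝ),(1:ℝ)) ∉ (P ∩ L3) + (P ∩ L3) ∧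
      (P ∩ L3) + (P ∩ L3) ⊂ (P + P) ∩ L3 := by
  intro P hP
  -- vertices are in P
  have hv : ∀ v ∈ ({((0:ℝ),(0:ℝ),(0:ℝ)), ((1:ℝ),(0:ℝ),(0:ℝ)),
      ((0:ℝ),(1:ℝ),(0:ℝ)), ((1:ℝ),(1:ℝ),(2:ℝ))} : Set (ℝ × ℝ × ℝ)), v ∈ P := by
    intro v hvm
    rw [hP]
    exact subset_convexHull ℝ _ hvm
  have h1 : P ∩ L3 = {((0:ℝ),(0:ℝ),(0:ℝ)), ((1:ℝ),(0:ℝ),(0:ℝ)),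
      ((0:ℝ),(1:ℝ),(0:ℝ)), ((1:ℝ),(1:ℝ),(2:ℝ))} := by
    ext p
    constructor
    · rintro ⟨hpP, ⟨m, hm⟩, ⟨n, hn⟩, ⟨k, hk⟩⟩
      have hineq := hull_subset_halfspaces (hP ▸ hpP)
      obtain ⟨i1, i2, i3, i4⟩ := hineq
      rw [hk] at i1
      rw [hm, hk] at i2
      rw [hn, hk] at i3
      rw [hm, hn, hk] at i4
      have j1 : (0:ℤ) ≤ k := by exact_mod_cast i1
      have j2 : (k:ℤ) ≤ 2 * m := by exact_mod_cast i2
      have j3 : (k:ℤ) ≤ 2 * n := by exact_mod_cast i3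
      have j4 : 2 * m + 2 * n - k ≤ (2:ℤ) := by exact_mod_cast i4
      have hpeq : p = ((m:ℝ), (n:ℝ), (k:ℝ)) := Prod.ext hm (Prod.ext hn hk)
      rw [hpeq]
      simp only [Set.mem_insert_iff, Set.mem_singleton_iff, Prod.mk.injEq]
      norm_cast
      omega
    · intro hpm
      refine ⟨hv p hpm, ?_⟩
      simp only [Set.mem_insert_iff, Set.mem_singleton_iff] at hpm
      rcases hpm with h | h | h | h <;> subst h
      · exact ⟨⟨0, by norm_num⟩, ⟨0, by norm_num⟩, ⟨0, by norm_num⟩⟩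
      · exact ⟨⟨1, by norm_num⟩, ⟨0, by norm_num⟩, ⟨0, by norm_num⟩⟩
      · exact ⟨⟨0, by norm_num⟩, ⟨1, by norm_num⟩, ⟨0, by norm_num⟩⟩
      · exact ⟨⟨1, by norm_num⟩, ⟨1, by norm_num⟩, ⟨2, by norm_num⟩⟩
  -- midpoint
  have hmid : ((1/2 : ℝ), (1/2 : ℝ), (1 : ℝ)) ∈ P := by
    rw [hP]
    have := segment_subset_convexHull (𝕜 := ℝ) (s := ({((0:ℝ),(0:ℝ),(0:ℝ)), ((1:ℝ),(0:ℝ),(0:ℝ)),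
        ((0:ℝ),(1:ℝ),(0:ℝ)), ((1:ℝ),(1:ℝ),(2:ℝ))} : Set (ℝ × ℝ × ℝ)))
      (x := ((0:ℝ),(0:ℝ),(0:ℝ))) (y := ((1:ℝ),(1:ℝ),(2:ℝ))) (by simp) (by simp)
    apply this
    refine ⟨1/2, 1/2, by norm_num, by norm_num, by norm_num, ?_⟩
    refine Prod.ext ?_ (Prod.ext ?_ ?_) <;> norm_num
  have hmid2 : ((1/2 : ℝ), (1/2 : ℝ), (0 : ℝ)) ∈ P := by
    rw [hP]
    have := segment_subset_convexHull (𝕜 := ℝ) (s := ({((0:ℝ),(0:ℝ),(0:ℝ)), ((1:ℝ),(0:ℝ),(0:ℝ)),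
        ((0:ℝ),(1:ℝ),(0:ℝ)), ((1:ℝ),(1:ℝ),(2:ℝ))} : Set (ℝ × ℝ × ℝ)))
      (x := ((1:ℝ),(0:ℝ),(0:ℝ))) (y := ((0:ℝ),(1:ℝ),(0:ℝ))) (by simp) (by simp)
    apply this
    refine ⟨1/2, 1/2, by norm_num, by norm_num, by norm_num, ?_⟩
    refine Prod.ext ?_ (Prod.ext ?_ ?_) <;> norm_num
  have h2 : ((1:ℝ),(1:ℝ),(1:ℝ)) ∈ (P + P) ∩ L3 := by
    refine ⟨?_, ⟨1, by norm_num⟩, ⟨1, by norm_num⟩, ⟨1, by norm_num⟩⟩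
    have := Set.add_mem_add hmid hmid2
    convert this using 1
    refine Prod.ext ?_ (Prod.ext ?_ ?_) <;> norm_num
  have h3 : ((1:ℝ),(1:ℝ),(1:ℝ)) ∉ (P ∩ L3) + (P ∩ L3) := by
    rw [h1]
    rintro ⟨a, ha, b, hb, hab⟩
    simp only [Set.mem_insert_iff, Set.mem_singleton_iff] at ha hb
    rcases ha with h | h | h | h <;> rcases hb with h' | h' | h' | h' <;> subst h <;> subst h' <;>
      simp only [Prod.mk_add_mk, Prod.mk.injEq] at hab <;> norm_num at hab
  refine ⟨h1, h2, h3, ?_⟩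
  rw [Set.ssubset_def]
  constructor
  · rintro x ⟨a, ha, b, hb, rfl⟩
    exact ⟨Set.add_mem_add ha.1 hb.1, L3_add ha.2 hb.2⟩
  · intro h
    exact h3 (h h2)
end
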